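/- arXiv:1404.7208 — 2 statements merged into one kernel-verified Lean document; each statement's English description precedes it below -/
import Mathlib

section
/- Let (Y_k, Z_k), k = 1,...,K, be independent pairs of random variables where each pair (Y_k, Z_k) is negatively quadrant dependent. Let H : ℝ^K → ℝ be coordinatewise monotone (in each argument either nondecreasing or nonincreasing, with consistent direction used for both arguments of a pair). Then E[H(Y_1,...,Y_K) H(Z_1,...,Z_K)] ≤ E[H(Y_1,...,Y_K)] E[H(Z_1,...,Z_K)], assuming all expectations exist. -/
/-!
Independence makes the law of the pairs a product of laws on `ℝ × ℝ`. For monotone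
`F, G : ℝ^K → [0, ∞]` one proves `∫⁻ F(Y) G(Z) ≤ ∫⁻ F(Y) · ∫⁻ G(Z)` by induction on `K`:
integrating out all pairs but the first leaves functions that are monotone in the first pair, so
everything reduces to a single pair. There the layer-cake formula expresses both sides through
superlevel sets of `F` and `G`, which are upper sets `U, V ⊆ ℝ`, and NQD gives
`P(Y ∈ U, Z ∈ V) ≤ P(Y ∈ U) P(Z ∈ V)`: first for lower sets, as monotone limits of the `Iic`, then
for upper sets by passing to complements. As `H` is not assumed measurable, this needs that upper
sets of `ℝ^K` are null-measurable for all products of σ-finite measures on `ℝ`.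

The theorem follows by negating the coordinates in which `H` is antitone, truncating `H` from
below by `max H (-n)`, shifting it by `n` to make it nonnegative, and letting `n → ∞` by dominated
convergence.
-/

open MeasureTheory

/-- Negative quadrant dependence of two real random variables. -/
def NQD {Ω : Type*} [MeasurableSpace Ω] (P : Measure Ω) (Y Z : Ω → ℝ) : Prop :=
  ∀ y z : ℝ, (P {ω | Y ω ≤ y ∧ Z ω ≤ z}).toReal ≤
    (P {ω | Y ω ≤ y}).toReal * (P {ω | Z ω ≤ z}).toReal

open ProbabilityTheory Set Filter
open scoped ENNReal Topology

theorem monotone_of_monotone_update {ι : Type*} [Fintype ι] [DecidableEq ι] {α : ι → Type*}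
    [∀ i, Preorder (α i)] {β : Type*} [Preorder β] {f : (∀ i, α i) → β}
    (hf : ∀ i x, Monotone fun a => f (Function.update x i a)) : Monotone f := by
  suffices ∀ s : Finset ι, ∀ x y, x ≤ y → (∀ i ∉ s, x i = y i) → f x ≤ f y from
    fun x y h => this Finset.univ x y h (by simp)
  intro s
  induction s using Finset.induction_on with
  | empty => intro x y _ h; rw [funext fun i => h i (Finset.notMem_empty i)]
  | insert i s hi ih =>
    intro x y hxy hout
    calc f x = f (Function.update x i (x i)) := by rw [Function.update_eq_self]
      _ ≤ f (Function.update x i (y i)) := hf i x (hxy i)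
      _ ≤ f y := ih _ _ (update_le_iff.2 ⟨le_rfl, fun j _ => hxy j⟩) fun j hj => by
          by_cases hji : j = i
          · subst hji; simp
          · rw [Function.update_of_ne hji]; exact hout j (by simp [hji, hj])

section NullMeasurable

variable {W : Type*} [MeasurableSpace W]

theorem ae_prod_exists_separating {μ : Measure ℝ} [SFinite μ] {π : Measure W} [SFinite π]
    {S : Set ℝ} (hS : S.Countable) (hQ : range ((↑) : ℚ → ℝ) ⊆ S)
    (hatom : ∀ t, 0 < μ {t} → t ∈ S) {B : ℝ → Set W} (hB : ∀ s, MeasurableSet (B s)) :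
    ∀ᵐ p ∂μ.prod π, ∃ s ∈ S, (s ≤ p.1 ∧ p.2 ∈ B s) ∨ (p.1 ≤ s ∧ p.2 ∉ B s) := by
  set M := {p : ℝ × W | ¬∃ s ∈ S, (s ≤ p.1 ∧ p.2 ∈ B s) ∨ (p.1 ≤ s ∧ p.2 ∉ B s)}
  have hM : MeasurableSet M := by
    have : M = ⋂ s ∈ S, (Ici s ×ˢ B s ∪ Iic s ×ˢ (B s)ᶜ)ᶜ := by ext; simp [M]
    rw [this]
    exact .biInter hS fun s _ => ((measurableSet_Ici.prod (hB s)).union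
      (measurableSet_Iic.prod (hB s).compl)).compl
  have hlt : ∀ {t₁ t₂ w}, t₁ < t₂ → (t₁, w) ∈ M → (t₂, w) ∉ M := by
    intro t₁ t₂ w h h₁ h₂
    obtain ⟨q, hq₁, hq₂⟩ := exists_rat_btwn h
    have hqS : (q : ℝ) ∈ S := hQ (mem_range_self q)
    simp only [M, mem_ofPred_eq, not_exists, not_or, not_and, not_not] at h₁ h₂
    exact (h₂ q hqS).1 hq₂.le ((h₁ q hqS).2 hq₁.le)
  -- A section of `M` is a subsingleton (a rational would separate two of its points) avoiding
  -- the atoms of `μ`.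
  have hsec : ∀ w, μ ((fun t => (t, w)) ⁻¹' M) = 0 := by
    intro w
    have hsub : ((fun t => (t, w)) ⁻¹' M).Subsingleton := fun t₁ h₁ t₂ h₂ => by
      by_contra hne
      rcases lt_or_gt_of_ne hne with h | h
      exacts [hlt h h₁ h₂, hlt h h₂ h₁]
    rcases hsub.eq_empty_or_singleton with h | ⟨t, ht⟩
    · simp [h]
    · rw [ht]
      by_contra h
      have htM : (t, w) ∈ M := ht.symm.subset rfl
      exact htM ⟨t, hatom t (pos_iff_ne_zero.2 h), by by_cases hw : w ∈ B t <;> simp [hw]⟩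
  rw [ae_iff, Measure.prod_apply_symm hM]
  simp [hsec]

theorem nullMeasurableSet_prod_of_monotone_sections (μ : Measure ℝ) [SFinite μ] (π : Measure W)
    [SFinite π] {A : Set (ℝ × W)} (hmono : Monotone fun t => Prod.mk t ⁻¹' A)
    (hsec : ∀ t, NullMeasurableSet (Prod.mk t ⁻¹' A) π) : NullMeasurableSet A (μ.prod π) := by
  -- Up to null sets, `A` is `⋃ s ∈ S, Ici s ×ˢ B s` with `B s` a measurable hull of the section
  -- at `s`, once `S` contains the rationals and the atoms of `μ`.
  set S : Set ℝ := range ((↑) : ℚ → ℝ) ∪ {t | 0 < μ {t}}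
  have hS : S.Countable := (countable_range _).union <|
    Measure.countable_meas_pos_of_disjoint_iUnion (fun t => measurableSet_singleton t)
      fun _ _ h => disjoint_singleton.2 h
  set B := fun s => toMeasurable π (Prod.mk s ⁻¹' A)
  have hAB : ∀ᵐ w ∂π, ∀ s ∈ S, ((s, w) ∈ A ↔ w ∈ B s) := (ae_ball_iff hS).2 fun s _ => by
    filter_upwards [(hsec s).toMeasurable_ae_eq] with w hw
    exact Iff.of_eq hw.symm
  have hL : MeasurableSet (⋃ s ∈ S, Ici s ×ˢ B s) :=
    .biUnion hS fun s _ => measurableSet_Ici.prod (measurableSet_toMeasurable _ _)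
  refine hL.nullMeasurableSet.congr ?_
  filter_upwards [Measure.quasiMeasurePreserving_snd.ae hAB,
    ae_prod_exists_separating hS subset_union_left (fun t ht => subset_union_right ht)
      (B := B) fun s => measurableSet_toMeasurable π _] with ⟨t, w⟩ hgood ⟨s, hs, hsep⟩
  refine propext ⟨fun h => ?_, fun hA => ?_⟩
  · obtain ⟨s', hs', hst, hw⟩ := mem_iUnion₂.1 h
    exact hmono hst ((hgood s' hs').2 hw)
  · rcases hsep with ⟨hst, hw⟩ | ⟨hts, hw⟩
    · exact mem_iUnion₂.2 ⟨s, hs, hst, hw⟩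
    · exact absurd ((hgood s hs).1 (hmono hts hA)) hw

theorem IsUpperSet.nullMeasurableSet_pi {K : ℕ} (μ : Fin K → Measure ℝ) [∀ k, SigmaFinite (μ k)]
    {A : Set (Fin K → ℝ)} (hA : IsUpperSet A) : NullMeasurableSet A (Measure.pi μ) := by
  induction K with
  | zero => exact Subsingleton.measurableSet.nullMeasurableSet
  | succ K ih =>
    set A' := {p : ℝ × (Fin K → ℝ) | Fin.cons p.1 p.2 ∈ A}
    have hA' : NullMeasurableSet A' ((μ 0).prod (Measure.pi fun j => μ (Fin.succAbove 0 j))) :=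
      nullMeasurableSet_prod_of_monotone_sections _ _
        (fun s t hst v hv => hA (Fin.cons_le_cons.2 ⟨hst, le_rfl⟩) hv)
        fun t => ih _ (hA.preimage fun v w h => Fin.cons_le_cons.2 ⟨le_rfl, h⟩)
    convert hA'.preimage (measurePreserving_piFinSuccAbove μ 0).quasiMeasurePreserving
    ext x
    simp [A', MeasurableEquiv.piFinSuccAbove_apply]

theorem Monotone.aemeasurable_pi {β : Type*} [TopologicalSpace β] [MeasurableSpace β] [BorelSpace β]
    [LinearOrder β] [OrderTopology β] [SecondCountableTopology β] {K : ℕ}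
    (μ : Fin K → Measure ℝ) [∀ k, SigmaFinite (μ k)] {f : (Fin K → ℝ) → β} (hf : Monotone f) :
    AEMeasurable f (Measure.pi μ) :=
  NullMeasurable.aemeasurable <| measurable_of_Ioi fun b =>
    ((isUpperSet_Ioi b).preimage hf).nullMeasurableSet_pi μ

theorem Monotone.aemeasurable_comp_pi {X β : Type*} [MeasurableSpace X] [TopologicalSpace β]
    [MeasurableSpace β] [BorelSpace β] [LinearOrder β] [OrderTopology β] [SecondCountableTopology β]
    {K : ℕ} (ν : Fin K → Measure X) [∀ k, IsFiniteMeasure (ν k)] {g : X → ℝ} (hg : Measurable g)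
    {f : (Fin K → ℝ) → β} (hf : Monotone f) :
    AEMeasurable (fun w => f fun k => g (w k)) (Measure.pi ν) := by
  have := hf.aemeasurable_pi fun k => (ν k).map g
  rw [← Measure.pi_map_pi fun k => hg.aemeasurable] at this
  exact this.comp_measurable (measurable_pi_lambda _ fun k => hg.comp (measurable_pi_apply k))

end NullMeasurable

section LayerCake

variable {α : Type*} [MeasurableSpace α] {μ : Measure α}

theorem setLIntegral_Ioi_ite_ofReal_lt (a c : ℝ≥0∞) :
    ∫⁻ s in Ioi (0 : ℝ), (if ENNReal.ofReal s < a then c else 0) = a * c := by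
  have hm : MeasurableSet {s : ℝ | ENNReal.ofReal s < a} :=
    measurableSet_lt ENNReal.measurable_ofReal measurable_const
  have hvol : volume ({s : ℝ | ENNReal.ofReal s < a} ∩ Ioi 0) = a := by
    rcases eq_or_ne a ⊤ with rfl | ha
    · simp
    · have : {s : ℝ | ENNReal.ofReal s < a} ∩ Ioi 0 = Ioo 0 a.toReal := by
        ext s
        simp only [mem_inter_iff, mem_ofPred_eq, mem_Ioi, mem_Ioo]
        constructor
        · rintro ⟨h, hs⟩; exact ⟨hs, (ENNReal.ofReal_lt_iff_lt_toReal hs.le ha).1 h⟩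
        · rintro ⟨hs, h⟩; exact ⟨(ENNReal.ofReal_lt_iff_lt_toReal hs.le ha).2 h, hs⟩
      rw [this, Real.volume_Ioo, sub_zero, ENNReal.ofReal_toReal ha]
  have : (fun s : ℝ => if ENNReal.ofReal s < a then c else 0) =
      {s : ℝ | ENNReal.ofReal s < a}.indicator fun _ => c := by
    ext s; simp [indicator_apply]
  rw [this, lintegral_indicator_const hm, Measure.restrict_apply hm, hvol, mul_comm]

theorem lintegral_mul_eq_lintegral_setLIntegral [SFinite μ] {u v : α → ℝ≥0∞} (hu : Measurable u)
    (hv : Measurable v) :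
    ∫⁻ x, u x * v x ∂μ = ∫⁻ s in Ioi (0 : ℝ), (∫⁻ x in {x | ENNReal.ofReal s < u x}, v x ∂μ) := by
  calc ∫⁻ x, u x * v x ∂μ
      = ∫⁻ x, (∫⁻ s in Ioi (0 : ℝ), if ENNReal.ofReal s < u x then v x else 0) ∂μ := by
        simp only [setLIntegral_Ioi_ite_ofReal_lt]
    _ = ∫⁻ s in Ioi (0 : ℝ), ∫⁻ x, (if ENNReal.ofReal s < u x then v x else 0) ∂μ :=
        lintegral_lintegral_swap (Measurable.ite
          (measurableSet_lt (ENNReal.measurable_ofReal.comp measurable_snd)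
            (hu.comp measurable_fst))
          (hv.comp measurable_fst) measurable_const).aemeasurable
    _ = _ := by
        congr with s
        rw [← lintegral_indicator (measurableSet_lt measurable_const hu)]
        simp [indicator_apply]

theorem lintegral_eq_lintegral_measure_ofReal_lt [SFinite μ] {u : α → ℝ≥0∞} (hu : Measurable u) :
    ∫⁻ x, u x ∂μ = ∫⁻ s in Ioi (0 : ℝ), μ {x | ENNReal.ofReal s < u x} := by
  simpa using lintegral_mul_eq_lintegral_setLIntegral (μ := μ) hu measurable_one

theorem lintegral_mul_le_of_measure_inter_le [SFinite μ] {u v : α → ℝ≥0∞} (hu : Measurable u)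
    (hv : Measurable v)
    (h : ∀ a b, μ ({x | a < u x} ∩ {x | b < v x}) ≤ μ {x | a < u x} * μ {x | b < v x}) :
    ∫⁻ x, u x * v x ∂μ ≤ (∫⁻ x, u x ∂μ) * ∫⁻ x, v x ∂μ := by
  have hanti : ∀ w : α → ℝ≥0∞, Antitone fun s : ℝ => μ {x | ENNReal.ofReal s < w x} :=
    fun w s t hst => measure_mono fun x hx => (ENNReal.ofReal_le_ofReal hst).trans_lt hx
  calc ∫⁻ x, u x * v x ∂μ
      = ∫⁻ s in Ioi (0 : ℝ), ∫⁻ t in Ioi (0 : ℝ),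
          μ ({x | ENNReal.ofReal s < u x} ∩ {x | ENNReal.ofReal t < v x}) := by
        rw [lintegral_mul_eq_lintegral_setLIntegral hu hv]
        congr with s
        rw [lintegral_eq_lintegral_measure_ofReal_lt hv]
        congr with t
        rw [Measure.restrict_apply (measurableSet_lt measurable_const hv), inter_comm]
    _ ≤ ∫⁻ s in Ioi (0 : ℝ), ∫⁻ t in Ioi (0 : ℝ),
          μ {x | ENNReal.ofReal s < u x} * μ {x | ENNReal.ofReal t < v x} :=
        lintegral_mono fun s => lintegral_mono fun t => h _ _
    _ = (∫⁻ x, u x ∂μ) * ∫⁻ x, v x ∂μ := by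
        rw [lintegral_lintegral_mul (hanti u).measurable.aemeasurable
          (hanti v).measurable.aemeasurable, ← lintegral_eq_lintegral_measure_ofReal_lt hu,
          ← lintegral_eq_lintegral_measure_ofReal_lt hv]

end LayerCake

section NQD

theorem measureReal_le_mul_iff {α : Type*} [MeasurableSpace α] {μ : Measure α} [IsFiniteMeasure μ]
    {s t u : Set α} : μ.real s ≤ μ.real t * μ.real u ↔ μ s ≤ μ t * μ u := by
  rw [measureReal_def, measureReal_def, measureReal_def, ← ENNReal.toReal_mul,
    ENNReal.toReal_le_toReal (measure_ne_top _ _) (by finiteness)]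

theorem IsLowerSet.exists_monotone_iUnion_Iic {L : Set ℝ} (hL : IsLowerSet L) (hne : L.Nonempty) :
    ∃ c : ℕ → ℝ, Monotone c ∧ ⋃ n, Iic (c n) = L := by
  by_cases hbdd : BddAbove L
  · by_cases hmax : sSup L ∈ L
    · exact ⟨fun _ => sSup L, monotone_const, by
        rw [iUnion_const]; exact (hL.Iic_subset hmax).antisymm fun x hx => le_csSup hbdd hx⟩
    · obtain ⟨c, hc, hlim, hcL⟩ := exists_seq_tendsto_sSup hne hbdd
      refine ⟨c, hc, (iUnion_subset fun n => hL.Iic_subset (hcL n)).antisymm fun x hx => ?_⟩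
      have hx : x < sSup L := (le_csSup hbdd hx).lt_of_ne fun h => hmax (h ▸ hx)
      obtain ⟨n, hn⟩ := (hlim.eventually (lt_mem_nhds hx)).exists
      exact mem_iUnion.2 ⟨n, hn.le⟩
  · refine ⟨Nat.cast, Nat.mono_cast, Set.ext fun x => ?_⟩
    obtain ⟨y, hy, hxy⟩ := not_bddAbove_iff.1 hbdd x
    exact iff_of_true (mem_iUnion.2 (exists_nat_ge x)) (hL hxy.le hy)

variable {Ω : Type*} [MeasurableSpace Ω] {P : Measure Ω} {Y Z : Ω → ℝ}

theorem NQD.measure_inter_le_of_isLowerSet [IsFiniteMeasure P] (h : NQD P Y Z)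
    {L M : Set ℝ} (hL : IsLowerSet L) (hM : IsLowerSet M) :
    P (Y ⁻¹' L ∩ Z ⁻¹' M) ≤ P (Y ⁻¹' L) * P (Z ⁻¹' M) := by
  rcases L.eq_empty_or_nonempty with rfl | hLne
  · simp
  rcases M.eq_empty_or_nonempty with rfl | hMne
  · simp
  obtain ⟨a, ha, rfl⟩ := hL.exists_monotone_iUnion_Iic hLne
  obtain ⟨b, hb, rfl⟩ := hM.exists_monotone_iUnion_Iic hMne
  have hYa : Monotone fun n => Y ⁻¹' Iic (a n) :=
    fun m n hmn => preimage_mono (Iic_subset_Iic.2 (ha hmn))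
  have hZb : Monotone fun n => Z ⁻¹' Iic (b n) :=
    fun m n hmn => preimage_mono (Iic_subset_Iic.2 (hb hmn))
  simp only [preimage_iUnion]
  rw [← iUnion_inter_of_monotone hYa hZb]
  exact le_of_tendsto_of_tendsto' (tendsto_measure_iUnion_atTop (hYa.inter hZb))
    (ENNReal.Tendsto.mul (tendsto_measure_iUnion_atTop hYa) (Or.inr (measure_ne_top _ _))
      (tendsto_measure_iUnion_atTop hZb) (Or.inr (measure_ne_top _ _)))
    fun n => measureReal_le_mul_iff.1 (h (a n) (b n))

theorem NQD.measureReal_inter_le_of_isUpperSet [IsProbabilityMeasure P] (h : NQD P Y Z)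
    (hY : Measurable Y) (hZ : Measurable Z) {U V : Set ℝ} (hU : IsUpperSet U) (hV : IsUpperSet V) :
    P.real (Y ⁻¹' U ∩ Z ⁻¹' V) ≤ P.real (Y ⁻¹' U) * P.real (Z ⁻¹' V) := by
  have hUm : MeasurableSet (Y ⁻¹' U) := hY hU.ordConnected.measurableSet
  have hVm : MeasurableSet (Z ⁻¹' V) := hZ hV.ordConnected.measurableSet
  have hc := measureReal_le_mul_iff.2 (h.measure_inter_le_of_isLowerSet hU.compl hV.compl)
  rw [preimage_compl, preimage_compl, ← compl_union, measureReal_compl (hUm.union hVm),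
    measureReal_compl hUm, measureReal_compl hVm, probReal_univ] at hc
  have := measureReal_union_add_inter (μ := P) (s := Y ⁻¹' U) hVm
  nlinarith

theorem NQD.neg [IsProbabilityMeasure P] (h : NQD P Y Z) (hY : Measurable Y) (hZ : Measurable Z) :
    NQD P (fun ω => -Y ω) (fun ω => -Z ω) := fun y z => by
  simp only [neg_le]
  exact h.measureReal_inter_le_of_isUpperSet hY hZ (isUpperSet_Ici (-y)) (isUpperSet_Ici (-z))

def UpperSetNQD (ν : Measure (ℝ × ℝ)) : Prop :=
  ∀ ⦃U V : Set ℝ⦄, IsUpperSet U → IsUpperSet V →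
    ν (Prod.fst ⁻¹' U ∩ Prod.snd ⁻¹' V) ≤ ν (Prod.fst ⁻¹' U) * ν (Prod.snd ⁻¹' V)

theorem NQD.upperSetNQD_map [IsProbabilityMeasure P] (h : NQD P Y Z) (hY : Measurable Y)
    (hZ : Measurable Z) : UpperSetNQD (P.map fun ω => (Y ω, Z ω)) := by
  intro U V hU hV
  have hUm : MeasurableSet (Prod.fst ⁻¹' U : Set (ℝ × ℝ)) :=
    measurable_fst hU.ordConnected.measurableSet
  have hVm : MeasurableSet (Prod.snd ⁻¹' V : Set (ℝ × ℝ)) :=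
    measurable_snd hV.ordConnected.measurableSet
  rw [Measure.map_apply (hY.prodMk hZ) (hUm.inter hVm), Measure.map_apply (hY.prodMk hZ) hUm,
    Measure.map_apply (hY.prodMk hZ) hVm]
  exact measureReal_le_mul_iff.1 (h.measureReal_inter_le_of_isUpperSet hY hZ hU hV)

theorem UpperSetNQD.lintegral_mul_le {ν : Measure (ℝ × ℝ)} [SFinite ν] (hν : UpperSetNQD ν)
    {f g : ℝ → ℝ≥0∞} (hf : Monotone f) (hg : Monotone g) :
    ∫⁻ p, f p.1 * g p.2 ∂ν ≤ (∫⁻ p, f p.1 ∂ν) * ∫⁻ p, g p.2 ∂ν :=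
  lintegral_mul_le_of_measure_inter_le (hf.measurable.comp measurable_fst)
    (hg.measurable.comp measurable_snd)
    fun a b => hν ((isUpperSet_Ioi a).preimage hf) ((isUpperSet_Ioi b).preimage hg)

end NQD

section Core

theorem lintegral_pi_fin_succ {X : Type*} [MeasurableSpace X] {K : ℕ}
    (ν : Fin (K + 1) → Measure X) [∀ k, SigmaFinite (ν k)] {f : (Fin (K + 1) → X) → ℝ≥0∞}
    (hf : AEMeasurable f (Measure.pi ν)) :
    ∫⁻ w, f w ∂Measure.pi ν =
      ∫⁻ a, ∫⁻ w, f (Fin.cons a w) ∂Measure.pi (fun j => ν j.succ) ∂ν 0 := by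
  have e := (measurePreserving_piFinSuccAbove ν 0).symm
  rw [← e.lintegral_comp_emb (MeasurableEquiv.measurableEmbedding _)]
  refine (lintegral_prod _ (hf.comp_quasiMeasurePreserving e.quasiMeasurePreserving)).trans ?_
  simp [MeasurableEquiv.piFinSuccAbove_symm_apply, Fin.insertNthEquiv, Fin.insertNth_zero']

theorem lintegral_pi_mul_le_of_monotone {K : ℕ} (ν : Fin K → Measure (ℝ × ℝ))
    [∀ k, IsFiniteMeasure (ν k)] (hν : ∀ k, UpperSetNQD (ν k)) {F G : (Fin K → ℝ) → ℝ≥0∞}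
    (hF : Monotone F) (hG : Monotone G) :
    ∫⁻ w, F (fun k => (w k).1) * G (fun k => (w k).2) ∂Measure.pi ν ≤
      (∫⁻ w, F (fun k => (w k).1) ∂Measure.pi ν) * ∫⁻ w, G (fun k => (w k).2) ∂Measure.pi ν := by
  induction K with
  | zero => rw [Measure.pi_of_empty ν]; simp [lintegral_dirac]
  | succ K ih =>
    have hcons : ∀ (g : ℝ × ℝ → ℝ) a (w : Fin K → ℝ × ℝ),
        (fun k => g (Fin.cons a w k : ℝ × ℝ)) = Fin.cons (g a) fun j => g (w j) := by
      intro g a w; ext k; cases k using Fin.cases <;> simp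
    have hmF := hF.aemeasurable_comp_pi ν measurable_fst
    have hmG := hG.aemeasurable_comp_pi ν measurable_snd
    rw [lintegral_pi_fin_succ ν (f := fun w => (F fun k => (w k).1) * G fun k => (w k).2)
      (hmF.mul hmG), lintegral_pi_fin_succ ν hmF, lintegral_pi_fin_succ ν hmG]
    simp only [hcons Prod.fst, hcons Prod.snd]
    have hψF : Monotone fun y =>
        ∫⁻ w, F (Fin.cons y fun j => (w j).1) ∂Measure.pi fun j => ν j.succ :=
      fun y y' h => lintegral_mono fun w => hF (Fin.cons_le_cons.2 ⟨h, le_rfl⟩)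
    have hψG : Monotone fun z =>
        ∫⁻ w, G (Fin.cons z fun j => (w j).2) ∂Measure.pi fun j => ν j.succ :=
      fun z z' h => lintegral_mono fun w => hG (Fin.cons_le_cons.2 ⟨h, le_rfl⟩)
    refine (lintegral_mono fun a => ?_).trans ((hν 0).lintegral_mul_le hψF hψG)
    exact ih _ (fun j => hν j.succ) (fun v v' h => hF (Fin.cons_le_cons.2 ⟨le_rfl, h⟩))
      (fun v v' h => hG (Fin.cons_le_cons.2 ⟨le_rfl, h⟩))

end Core

section Truncation

variable {Ω : Type*} [MeasurableSpace Ω] {μ : Measure Ω}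

theorem abs_max_neg_le (x : ℝ) {c : ℝ} (hc : 0 ≤ c) : |max x (-c)| ≤ |x| :=
  abs_le.2 ⟨le_max_of_le_left (neg_abs_le x),
    max_le (le_abs_self x) ((neg_nonpos.2 hc).trans (abs_nonneg x))⟩

theorem abs_max_neg_mul_max_neg_le (x y : ℝ) {c : ℝ} (hc : 0 ≤ c) :
    |max x (-c) * max y (-c)| ≤ |x * y| := by
  rw [abs_mul, abs_mul]
  exact mul_le_mul (abs_max_neg_le x hc) (abs_max_neg_le y hc) (abs_nonneg _) (abs_nonneg _)

theorem tendsto_max_neg_natCast (x : ℝ) : Tendsto (fun n : ℕ => max x (-n)) atTop (𝓝 x) :=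
  tendsto_const_nhds.congr' <| (tendsto_natCast_atTop_atTop.eventually_ge_atTop (-x)).mono
    fun _ hn => (max_eq_left (neg_le.1 hn)).symm

theorem tendsto_integral_max_neg {f : Ω → ℝ} (hf : Integrable f μ) :
    Tendsto (fun n : ℕ => ∫ ω, max (f ω) (-n) ∂μ) atTop (𝓝 (∫ ω, f ω ∂μ)) :=
  tendsto_integral_of_dominated_convergence (fun ω => |f ω|)
    (fun _ => hf.aestronglyMeasurable.sup aestronglyMeasurable_const) hf.abs
    (fun n => ae_of_all _ fun ω => abs_max_neg_le (f ω) n.cast_nonneg)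
    (ae_of_all _ fun ω => tendsto_max_neg_natCast (f ω))

theorem MeasureTheory.Integrable.max_neg_mul_max_neg {f g : Ω → ℝ} (hf : AEStronglyMeasurable f μ)
    (hg : AEStronglyMeasurable g μ) (hfg : Integrable (fun ω => f ω * g ω) μ) (c : ℝ) (hc : 0 ≤ c) :
    Integrable (fun ω => max (f ω) (-c) * max (g ω) (-c)) μ :=
  hfg.abs.mono' ((hf.sup aestronglyMeasurable_const).mul (hg.sup aestronglyMeasurable_const))
    (ae_of_all _ fun ω => abs_max_neg_mul_max_neg_le (f ω) (g ω) hc)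

theorem tendsto_integral_max_neg_mul {f g : Ω → ℝ} (hf : AEStronglyMeasurable f μ)
    (hg : AEStronglyMeasurable g μ) (hfg : Integrable (fun ω => f ω * g ω) μ) :
    Tendsto (fun n : ℕ => ∫ ω, max (f ω) (-n) * max (g ω) (-n) ∂μ) atTop
      (𝓝 (∫ ω, f ω * g ω ∂μ)) :=
  tendsto_integral_of_dominated_convergence (fun ω => |f ω * g ω|)
    (fun _ => (hf.sup aestronglyMeasurable_const).mul (hg.sup aestronglyMeasurable_const)) hfg.abs
    (fun n => ae_of_all _ fun ω => abs_max_neg_mul_max_neg_le (f ω) (g ω) n.cast_nonneg)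
    (ae_of_all _ fun ω => (tendsto_max_neg_natCast (f ω)).mul (tendsto_max_neg_natCast (g ω)))

theorem integral_mul_le_of_lintegral_mul_le {f g : Ω → ℝ} (hf0 : 0 ≤ f) (hg0 : 0 ≤ g)
    (hf : Integrable f μ) (hg : Integrable g μ) (hfg : Integrable (fun ω => f ω * g ω) μ)
    (h : ∫⁻ ω, ENNReal.ofReal (f ω) * ENNReal.ofReal (g ω) ∂μ ≤
      (∫⁻ ω, ENNReal.ofReal (f ω) ∂μ) * ∫⁻ ω, ENNReal.ofReal (g ω) ∂μ) :
    ∫ ω, f ω * g ω ∂μ ≤ (∫ ω, f ω ∂μ) * ∫ ω, g ω ∂μ := by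
  rw [← ENNReal.ofReal_le_ofReal_iff (mul_nonneg (integral_nonneg hf0) (integral_nonneg hg0)),
    ENNReal.ofReal_mul (integral_nonneg hf0),
    ofReal_integral_eq_lintegral_ofReal hfg (ae_of_all _ fun ω => mul_nonneg (hf0 ω) (hg0 ω)),
    ofReal_integral_eq_lintegral_ofReal hf (ae_of_all _ hf0),
    ofReal_integral_eq_lintegral_ofReal hg (ae_of_all _ hg0)]
  simpa only [ENNReal.ofReal_mul (hf0 _)] using h

theorem integral_mul_le_of_integral_sub_mul_le [IsProbabilityMeasure μ] {f g : Ω → ℝ}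
    (hf : Integrable f μ) (hg : Integrable g μ) (hfg : Integrable (fun ω => f ω * g ω) μ) (c : ℝ)
    (h : ∫ ω, (f ω - c) * (g ω - c) ∂μ ≤ (∫ ω, f ω - c ∂μ) * ∫ ω, g ω - c ∂μ) :
    ∫ ω, f ω * g ω ∂μ ≤ (∫ ω, f ω ∂μ) * ∫ ω, g ω ∂μ := by
  have hexp : ∀ ω, (f ω - c) * (g ω - c) = f ω * g ω - c * f ω - c * g ω + c * c :=
    fun ω => by ring
  simp only [hexp] at h
  have h₁ : Integrable (fun ω => f ω * g ω - c * f ω) μ := hfg.sub (hf.const_mul c)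
  have h₂ : Integrable (fun ω => f ω * g ω - c * f ω - c * g ω) μ := h₁.sub (hg.const_mul c)
  rw [integral_add h₂ (integrable_const _), integral_sub h₁ (hg.const_mul c),
    integral_sub hfg (hf.const_mul c),
    integral_sub hf (integrable_const c), integral_sub hg (integrable_const c),
    integral_const_mul, integral_const_mul] at h
  simp only [integral_const, probReal_univ, one_smul] at h
  nlinarith

end Truncation

section Monotone

variable {Ω : Type*} [MeasurableSpace Ω] {P : Measure Ω} [IsProbabilityMeasure P] {K : ℕ}
  {Y Z : Fin K → Ω → ℝ}

theorem lintegral_mul_le_of_monotone (hY : ∀ k, Measurable (Y k))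
    (hZ : ∀ k, Measurable (Z k)) (hindep : iIndepFun (fun k ω => (Y k ω, Z k ω)) P)
    (hNQD : ∀ k, NQD P (Y k) (Z k)) {F G : (Fin K → ℝ) → ℝ≥0∞} (hF : Monotone F)
    (hG : Monotone G) :
    ∫⁻ ω, F (fun k => Y k ω) * G (fun k => Z k ω) ∂P ≤
      (∫⁻ ω, F (fun k => Y k ω) ∂P) * ∫⁻ ω, G (fun k => Z k ω) ∂P := by
  have hpair : ∀ k, Measurable fun ω => (Y k ω, Z k ω) := fun k => (hY k).prodMk (hZ k)
  have hX : Measurable fun ω k => (Y k ω, Z k ω) := measurable_pi_lambda _ hpair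
  have hlaw := hindep.map_fun_eq_pi_map fun k => (hpair k).aemeasurable
  have key := lintegral_pi_mul_le_of_monotone _
    (fun k => (hNQD k).upperSetNQD_map (hY k) (hZ k)) hF hG
  have hmF := hF.aemeasurable_comp_pi (fun k => P.map fun ω => (Y k ω, Z k ω)) measurable_fst
  have hmG := hG.aemeasurable_comp_pi (fun k => P.map fun ω => (Y k ω, Z k ω)) measurable_snd
  rw [← hlaw] at key hmF hmG
  rwa [lintegral_map' (f := fun w => (F fun k => (w k).1) * G fun k => (w k).2) (hmF.mul hmG)
      hX.aemeasurable, lintegral_map' hmF hX.aemeasurable,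
    lintegral_map' hmG hX.aemeasurable] at key

theorem integral_mul_le_of_monotone_of_le (hY : ∀ k, Measurable (Y k))
    (hZ : ∀ k, Measurable (Z k)) (hindep : iIndepFun (fun k ω => (Y k ω, Z k ω)) P)
    (hNQD : ∀ k, NQD P (Y k) (Z k)) {H : (Fin K → ℝ) → ℝ} (hH : Monotone H) {c : ℝ}
    (hc : ∀ v, c ≤ H v) (hYi : Integrable (fun ω => H fun k => Y k ω) P)
    (hZi : Integrable (fun ω => H fun k => Z k ω) P)
    (hYZi : Integrable (fun ω => (H fun k => Y k ω) * H fun k => Z k ω) P) :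
    ∫ ω, (H fun k => Y k ω) * H (fun k => Z k ω) ∂P ≤
      (∫ ω, H (fun k => Y k ω) ∂P) * ∫ ω, H (fun k => Z k ω) ∂P := by
  have hHc : Monotone fun v => ENNReal.ofReal (H v - c) :=
    fun v w h => ENNReal.ofReal_le_ofReal (sub_le_sub_right (hH h) c)
  refine integral_mul_le_of_integral_sub_mul_le hYi hZi hYZi c ?_
  refine integral_mul_le_of_lintegral_mul_le (fun ω => sub_nonneg.2 (hc _))
    (fun ω => sub_nonneg.2 (hc _)) (hYi.sub (integrable_const c)) (hZi.sub (integrable_const c))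
    ?_ (lintegral_mul_le_of_monotone hY hZ hindep hNQD hHc hHc)
  have hexp : ∀ ω, ((H fun k => Y k ω) - c) * ((H fun k => Z k ω) - c) =
      (H fun k => Y k ω) * (H fun k => Z k ω) - c * (H fun k => Y k ω) -
        c * (H fun k => Z k ω) + c * c := fun ω => by ring
  simp only [hexp]
  exact (((hYZi.sub (hYi.const_mul c)).sub (hZi.const_mul c)).add (integrable_const _))

theorem integral_mul_le_of_monotone (hY : ∀ k, Measurable (Y k))
    (hZ : ∀ k, Measurable (Z k)) (hindep : iIndepFun (fun k ω => (Y k ω, Z k ω)) P)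
    (hNQD : ∀ k, NQD P (Y k) (Z k)) {H : (Fin K → ℝ) → ℝ} (hH : Monotone H)
    (hYi : Integrable (fun ω => H fun k => Y k ω) P)
    (hZi : Integrable (fun ω => H fun k => Z k ω) P)
    (hYZi : Integrable (fun ω => (H fun k => Y k ω) * H fun k => Z k ω) P) :
    ∫ ω, (H fun k => Y k ω) * H (fun k => Z k ω) ∂P ≤
      (∫ ω, H (fun k => Y k ω) ∂P) * ∫ ω, H (fun k => Z k ω) ∂P := by
  refine le_of_tendsto_of_tendsto' (tendsto_integral_max_neg_mul hYi.1 hZi.1 hYZi)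
    ((tendsto_integral_max_neg hYi).mul (tendsto_integral_max_neg hZi)) fun n => ?_
  exact integral_mul_le_of_monotone_of_le hY hZ hindep hNQD (H := fun v => max (H v) (-n))
    (hH.max monotone_const) (fun v => le_max_right _ _) (hYi.sup (integrable_const _))
    (hZi.sup (integrable_const _))
    (hYZi.max_neg_mul_max_neg hYi.1 hZi.1 n n.cast_nonneg)

end Monotone

def flipSign (b : Bool) (x : ℝ) : ℝ := if b then x else -x

@[simp] theorem flipSign_flipSign (b : Bool) (x : ℝ) : flipSign b (flipSign b x) = x := by
  cases b <;> simp [flipSign]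

theorem measurable_flipSign (b : Bool) : Measurable (flipSign b) := by
  cases b
  exacts [measurable_neg, measurable_id]

theorem NQD.flipSign {Ω : Type*} [MeasurableSpace Ω] {P : Measure Ω} [IsProbabilityMeasure P]
    {Y Z : Ω → ℝ} (h : NQD P Y Z) (hY : Measurable Y) (hZ : Measurable Z) (b : Bool) :
    NQD P (fun ω => flipSign b (Y ω)) (fun ω => flipSign b (Z ω)) := by
  cases b
  exacts [h.neg hY hZ, h]

theorem monotone_comp_flipSign {K : ℕ} {H : (Fin K → ℝ) → ℝ} {ε : Fin K → Bool}
    (hH : ∀ k, ∀ v : Fin K → ℝ,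
      if ε k = true then Monotone (fun s => H (Function.update v k s))
      else Antitone (fun s => H (Function.update v k s))) :
    Monotone fun v : Fin K → ℝ => H fun k => flipSign (ε k) (v k) := by
  classical
  refine monotone_of_monotone_update fun k v => ?_
  have hupd : ∀ s, (fun j => flipSign (ε j) (Function.update v k s j)) =
      Function.update (fun j => flipSign (ε j) (v j)) k (flipSign (ε k) s) :=
    fun s => funext (Function.apply_update (fun j => flipSign (ε j)) v k s)
  simp only [hupd]
  have h := hH k fun j => flipSign (ε j) (v j)
  cases hk : ε k <;> simp only [hk, if_true, Bool.false_eq_true, if_false] at h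
  exacts [h.comp fun a b hab => neg_le_neg hab, h]

/-- Multivariate extension of Lehmann's lemma: if `(Y_k, Z_k)` are independent
pairs, each pair NQD, and `H` is coordinatewise monotone (with consistent
direction per coordinate), then `E[H(Y)H(Z)] ≤ E[H(Y)] E[H(Z)]`. -/
theorem nqd_pairs_multivariate_monotone
    {Ω : Type*} [MeasurableSpace Ω] (P : Measure Ω) [IsProbabilityMeasure P]
    (K : ℕ) (Y Z : Fin K → Ω → ℝ)
    (hYm : ∀ k, Measurable (Y k)) (hZm : ∀ k, Measurable (Z k))
    (hindep : ProbabilityTheory.iIndepFun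
      (fun k ω => (Y k ω, Z k ω)) P)
    (hNQD : ∀ k, NQD P (Y k) (Z k))
    (ε : Fin K → Bool)
    (H : (Fin K → ℝ) → ℝ)
    (hH : ∀ k, ∀ v : Fin K → ℝ,
      if ε k = true then Monotone (fun s => H (Function.update v k s))
      else Antitone (fun s => H (Function.update v k s)))
    (hint1 : Integrable (fun ω => H (fun k => Y k ω)) P)
    (hint2 : Integrable (fun ω => H (fun k => Z k ω)) P)
    (hint3 : Integrable (fun ω => H (fun k => Y k ω) * H (fun k => Z k ω)) P) :
    ∫ ω, H (fun k => Y k ω) * H (fun k => Z k ω) ∂P ≤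
      (∫ ω, H (fun k => Y k ω) ∂P) * ∫ ω, H (fun k => Z k ω) ∂P := by
  have := integral_mul_le_of_monotone (Y := fun k ω => flipSign (ε k) (Y k ω))
    (Z := fun k ω => flipSign (ε k) (Z k ω)) (fun k => (measurable_flipSign _).comp (hYm k))
    (fun k => (measurable_flipSign _).comp (hZm k))
    (hindep.comp (fun k p => (flipSign (ε k) p.1, flipSign (ε k) p.2))
      fun k => ((measurable_flipSign _).comp measurable_fst).prodMk
        ((measurable_flipSign _).comp measurable_snd))
    (fun k => (hNQD k).flipSign (hYm k) (hZm k) (ε k)) (monotone_comp_flipSign hH)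
    (by simpa only [flipSign_flipSign]) (by simpa only [flipSign_flipSign])
    (by simpa only [flipSign_flipSign])
  simpa only [flipSign_flipSign] using this
end

section
/- (ANOVA orthogonality.) Let f : (0,1]^m → ℝ be square-integrable with respect to the uniform product measure, and define the functional ANOVA components recursively by f_u(ξ^u) = ∫ [f(ξ) - ∑_{v ⊊ u} f_v(ξ^v)] dF_{D∖u} for u ⊆ {1,...,m}. Then f = ∑_{u ⊆ {1,...,m}} f_u, and the components are orthogonal: for u ≠ w, ∫ f_u(ξ^u) f_w(ξ^w) dF = 0; consequently Var(f(ξ)) = ∑_{u ≠ ∅} Var(f_u(ξ^u)). -/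
/-!
Write `E_b h` (`condMean ν b h`) for `h` with the coordinates outside `b` integrated out.
Since the gluing map `(x, y) ↦ b.piecewise x y` carries `μ ⊗ μ` to `μ`, Fubini gives the tower
rule `E_b E_u = E_{u ∩ b}` (a.e.), and the recursion gives `E_a f = ∑_{v ⊆ a} f_v`. Hence, by
strong induction on `u`, `E_b f_u = 0` a.e. whenever `u ⊄ b`: with `a = u ∩ b ⊊ u`,
`E_b f_u = E_a f - ∑_{v ⊊ u} E_a f_v`, where the terms `v ⊆ a` cancel against `E_a f` and the
others vanish by induction. If `u ⊄ w` then `∫ f_u f_w = ∫ (E_w f_u) f_w = 0`, and the variance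
identity is Pythagoras together with `f_∅ = ∫ f`.
-/

open MeasureTheory Finset

section Piecewise

variable {ι : Type*} [DecidableEq ι] {α : ι → Type*}

theorem Finset.preimage_piecewise_pi (s : Finset ι) (t : ∀ i, Set (α i)) :
    (fun p : (∀ i, α i) × (∀ i, α i) => s.piecewise p.1 p.2) ⁻¹' Set.univ.pi t =
      Set.univ.pi (s.piecewise t fun _ => Set.univ) ×ˢ
        Set.univ.pi (s.piecewise (fun _ => Set.univ) t) := by
  ext p
  simp only [Set.mem_preimage, Set.mem_pi, Set.mem_univ, true_implies, Set.mem_prod,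
    Finset.piecewise, ← forall_and]
  refine forall_congr' fun i => ?_
  split_ifs <;> simp

variable [∀ i, MeasurableSpace (α i)]

theorem Finset.measurable_piecewise_prod (s : Finset ι) :
    Measurable fun p : (∀ i, α i) × (∀ i, α i) => s.piecewise p.1 p.2 := by
  refine measurable_pi_lambda _ fun i => ?_
  by_cases hi : i ∈ s <;> simp only [Finset.piecewise_eq_of_mem, Finset.piecewise_eq_of_notMem, hi,
    not_false_eq_true] <;> fun_prop

variable [Fintype ι] (ν : ∀ i, Measure (α i)) [∀ i, IsProbabilityMeasure (ν i)]

theorem measurePreserving_piecewise (s : Finset ι) :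
    MeasurePreserving (fun p : (∀ i, α i) × (∀ i, α i) => s.piecewise p.1 p.2)
      ((Measure.pi ν).prod (Measure.pi ν)) (Measure.pi ν) := by
  refine ⟨s.measurable_piecewise_prod, (Measure.pi_eq fun t ht => ?_).symm⟩
  rw [Measure.map_apply s.measurable_piecewise_prod (.univ_pi ht), s.preimage_piecewise_pi,
    Measure.prod_prod, Measure.pi_pi, Measure.pi_pi, ← Finset.prod_mul_distrib]
  refine Finset.prod_congr rfl fun i _ => ?_
  by_cases hi : i ∈ s <;> simp [hi]

/-- `∫ h dF_{D∖s}` in the paper's notation. -/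
noncomputable def condMean (s : Finset ι) (h : (∀ i, α i) → ℝ) (x : ∀ i, α i) : ℝ :=
  ∫ y, h (s.piecewise x y) ∂Measure.pi ν

variable {ν} {h g : (∀ i, α i) → ℝ} {s t : Finset ι}

theorem condMean_of_dependsOn (hh : DependsOn h s) : condMean ν s h = h := by
  funext x
  have hconst : ∀ y, h (s.piecewise x y) = h x := fun y =>
    hh fun i hi => s.piecewise_eq_of_mem _ _ (Finset.mem_coe.1 hi)
  simp [condMean, hconst]

theorem condMean_of_dependsOn_of_subset {v : Finset ι} (hh : DependsOn h v) (hvs : v ⊆ s) :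
    condMean ν s h = h :=
  condMean_of_dependsOn (hh.mono (coe_subset.2 hvs))

theorem ae_integrable_comp_piecewise (hh : Integrable h (Measure.pi ν)) (s : Finset ι) :
    ∀ᵐ x ∂Measure.pi ν, Integrable (fun y => h (s.piecewise x y)) (Measure.pi ν) :=
  (((measurePreserving_piecewise ν s).integrable_comp hh.aestronglyMeasurable).2 hh).prod_right_ae

theorem integral_condMean (hh : Integrable h (Measure.pi ν)) (s : Finset ι) :
    ∫ x, condMean ν s h x ∂Measure.pi ν = ∫ x, h x ∂Measure.pi ν := by
  have hp := measurePreserving_piecewise ν s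
  have hglued : Integrable (fun p : (∀ i, α i) × (∀ i, α i) => h (s.piecewise p.1 p.2))
      ((Measure.pi ν).prod (Measure.pi ν)) :=
    (hp.integrable_comp hh.aestronglyMeasurable).2 hh
  have htransport := integral_map (f := h) hp.measurable.aemeasurable
    (hp.map_eq ▸ hh.aestronglyMeasurable)
  rw [hp.map_eq] at htransport
  unfold condMean
  rw [← integral_prod _ hglued, htransport]

theorem condMean_condMean_ae_eq (hh : Integrable h (Measure.pi ν)) (s t : Finset ι) :
    condMean ν t (condMean ν s h) =ᵐ[Measure.pi ν] condMean ν (s ∩ t) h := by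
  filter_upwards [ae_integrable_comp_piecewise hh (s ∩ t)] with x hx
  have hglue : ∀ y z, s.piecewise (t.piecewise x y) z = (s ∩ t).piecewise x (s.piecewise y z) := by
    intro y z
    funext i
    by_cases his : i ∈ s <;> by_cases hit : i ∈ t <;> simp [Finset.piecewise, his, hit]
  simp only [condMean, hglue]
  exact integral_condMean hx s

theorem condMean_sub_sum_ae_eq {κ : Type*} {H : κ → (∀ i, α i) → ℝ} {t : Finset κ}
    (hh : Integrable h (Measure.pi ν)) (hH : ∀ v ∈ t, Integrable (H v) (Measure.pi ν))
    (s : Finset ι) :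
    condMean ν s (fun x => h x - ∑ v ∈ t, H v x) =ᵐ[Measure.pi ν]
      fun x => condMean ν s h x - ∑ v ∈ t, condMean ν s (H v) x := by
  filter_upwards [ae_integrable_comp_piecewise hh s,
    (Filter.eventually_all_finset t).2 fun v hv => ae_integrable_comp_piecewise (hH v hv) s]
    with x hx hHx
  rw [condMean, integral_sub hx (integrable_finsetSum t hHx), integral_finsetSum t hHx]
  rfl

theorem integral_mul_eq_integral_condMean_mul (hg : DependsOn g s)
    (hhg : Integrable (fun x => h x * g x) (Measure.pi ν)) :
    ∫ x, h x * g x ∂Measure.pi ν = ∫ x, condMean ν s h x * g x ∂Measure.pi ν := by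
  rw [← integral_condMean hhg s]
  congr 1
  funext x
  have hconst : ∀ y, g (s.piecewise x y) = g x := fun y =>
    hg fun i hi => s.piecewise_eq_of_mem _ _ (Finset.mem_coe.1 hi)
  simp only [condMean, hconst, integral_mul_const]

end Piecewise

theorem integral_sq_sum_of_integral_mul_eq_zero {β κ : Type*} [MeasurableSpace β] {μ : Measure β}
    {G : κ → β → ℝ} {t : Finset κ} (hG : ∀ u ∈ t, MemLp (G u) 2 μ)
    (horth : ∀ u ∈ t, ∀ w ∈ t, u ≠ w → ∫ x, G u x * G w x ∂μ = 0) :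
    ∫ x, (∑ u ∈ t, G u x) ^ 2 ∂μ = ∑ u ∈ t, ∫ x, G u x ^ 2 ∂μ := by
  have hint : ∀ u ∈ t, ∀ w ∈ t, Integrable (fun x => G u x * G w x) μ := fun u hu w hw =>
    (hG u hu).integrable_mul (hG w hw)
  simp_rw [sq, sum_mul_sum]
  rw [integral_finsetSum _ fun u hu => integrable_finsetSum _ (hint u hu)]
  refine sum_congr rfl fun u hu => ?_
  rw [integral_finsetSum _ (hint u hu),
    sum_eq_single_of_mem u hu fun w hw hwu => horth u hu w hw hwu.symm]

theorem Finset.filter_subset_powerset_erase_eq_powerset {κ : Type*} [DecidableEq κ] {a u : Finset κ}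
    (hau : a ⊂ u) : filter (· ⊆ a) (u.powerset.erase u) = a.powerset := by
  ext v
  simp only [mem_filter, mem_erase, mem_powerset]
  exact ⟨fun h => h.2, fun h => ⟨⟨fun hvu => hau.2 (hvu ▸ h), h.trans hau.subset⟩, h⟩⟩

section Anova

variable {ι : Type*} [Fintype ι] [DecidableEq ι] {α : ι → Type*} [∀ i, MeasurableSpace (α i)]

def IsAnovaDecomposition (ν : ∀ i, Measure (α i)) (f : (∀ i, α i) → ℝ)
    (F : Finset ι → (∀ i, α i) → ℝ) : Prop :=
  ∀ u, F u = condMean ν u fun x => f x - ∑ v ∈ u.powerset.erase u, F v x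

namespace IsAnovaDecomposition

variable {ν : ∀ i, Measure (α i)} {f : (∀ i, α i) → ℝ} {F : Finset ι → (∀ i, α i) → ℝ}

theorem apply_empty (hF : IsAnovaDecomposition ν f F) (x : ∀ i, α i) :
    F ∅ x = ∫ y, f y ∂Measure.pi ν := by
  rw [hF ∅]
  simp [condMean]

variable [∀ i, IsProbabilityMeasure (ν i)]

theorem sum_powerset_univ (hF : IsAnovaDecomposition ν f F) (x : ∀ i, α i) :
    ∑ u ∈ univ.powerset, F u x = f x := by
  have htop := congrFun (hF univ) x
  rw [condMean_of_dependsOn (coe_univ (α := ι) ▸ dependsOn_univ _)] at htop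
  rw [← sum_erase_add _ _ (mem_powerset_self univ), htop]
  ring

theorem condMean_ae_eq_sum_powerset (hF : IsAnovaDecomposition ν f F)
    (hf : Integrable f (Measure.pi ν)) (hFi : ∀ u, Integrable (F u) (Measure.pi ν))
    (hdep : ∀ u, DependsOn (F u) u) (a : Finset ι) :
    condMean ν a f =ᵐ[Measure.pi ν] fun x => ∑ v ∈ a.powerset, F v x := by
  filter_upwards [condMean_sub_sum_ae_eq hf (fun v _ => hFi v) a] with x hx
  rw [← hF a, sum_congr rfl fun v hv => congrFun (condMean_of_dependsOn_of_subset (hdep v)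
    (mem_powerset.1 (mem_of_mem_erase hv))) x] at hx
  rw [← sum_erase_add _ _ (mem_powerset_self a)]
  linarith

theorem condMean_ae_eq_zero (hF : IsAnovaDecomposition ν f F)
    (hf : Integrable f (Measure.pi ν)) (hFi : ∀ u, Integrable (F u) (Measure.pi ν))
    (hdep : ∀ u, DependsOn (F u) u) {u b : Finset ι} (hub : ¬ u ⊆ b) :
    condMean ν b (F u) =ᵐ[Measure.pi ν] 0 := by
  induction u using Finset.strongInduction generalizing b with
  | H u ih =>
  set a := u ∩ b
  have hau : a ⊂ u := ssubset_of_subset_of_ne inter_subset_left fun h => hub (inter_eq_left.1 h)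
  have hvanish : ∀ᵐ x ∂Measure.pi ν, ∀ v ∈ filter (¬ · ⊆ a) (u.powerset.erase u),
      condMean ν a (F v) x = 0 := by
    refine (Filter.eventually_all_finset _).2 fun v hv => ?_
    simp only [mem_filter, mem_erase, mem_powerset] at hv
    exact ih v (ssubset_of_subset_of_ne hv.1.2 hv.1.1) hv.2
  have hgu : Integrable (fun x => f x - ∑ v ∈ u.powerset.erase u, F v x) (Measure.pi ν) :=
    hf.sub (integrable_finsetSum _ fun v _ => hFi v)
  calc condMean ν b (F u)
      = condMean ν b (condMean ν u fun x => f x - ∑ v ∈ u.powerset.erase u, F v x) :=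
        congrArg (condMean ν b) (hF u)
    _ =ᵐ[Measure.pi ν] condMean ν a fun x => f x - ∑ v ∈ u.powerset.erase u, F v x :=
        condMean_condMean_ae_eq hgu u b
    _ =ᵐ[Measure.pi ν]
        fun x => condMean ν a f x - ∑ v ∈ u.powerset.erase u, condMean ν a (F v) x :=
        condMean_sub_sum_ae_eq hf (fun v _ => hFi v) a
    _ =ᵐ[Measure.pi ν] 0 := by
        filter_upwards [hF.condMean_ae_eq_sum_powerset hf hFi hdep a, hvanish] with x hfx hvx
        rw [hfx, ← sum_filter_add_sum_filter_not (u.powerset.erase u) (· ⊆ a), 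
          filter_subset_powerset_erase_eq_powerset hau, sum_eq_zero hvx,
          sum_congr rfl fun v hv =>
            congrFun (condMean_of_dependsOn_of_subset (hdep v) (mem_powerset.1 hv)) x]
        simp

theorem integral_mul_eq_zero_of_not_subset (hF : IsAnovaDecomposition ν f F)
    (hf : Integrable f (Measure.pi ν)) (hF2 : ∀ u, MemLp (F u) 2 (Measure.pi ν))
    (hdep : ∀ u, DependsOn (F u) u) {u w : Finset ι} (huw : ¬ u ⊆ w) :
    ∫ x, F u x * F w x ∂Measure.pi ν = 0 := by
  have hzero := hF.condMean_ae_eq_zero hf (fun v => (hF2 v).integrable one_le_two) hdep huw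
  rw [integral_mul_eq_integral_condMean_mul (hdep w) ((hF2 u).integrable_mul (hF2 w))]
  refine integral_eq_zero_of_ae ?_
  filter_upwards [hzero] with x hx
  simp [hx]

theorem integral_mul_eq_zero (hF : IsAnovaDecomposition ν f F)
    (hf : Integrable f (Measure.pi ν)) (hF2 : ∀ u, MemLp (F u) 2 (Measure.pi ν))
    (hdep : ∀ u, DependsOn (F u) u) {u w : Finset ι} (huw : u ≠ w) :
    ∫ x, F u x * F w x ∂Measure.pi ν = 0 := by
  by_cases h : u ⊆ w
  · simp_rw [mul_comm (F u _)]
    exact hF.integral_mul_eq_zero_of_not_subset hf hF2 hdep fun h' => huw (h.antisymm h')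
  · exact hF.integral_mul_eq_zero_of_not_subset hf hF2 hdep h

theorem integral_sq_sub_sq_integral (hF : IsAnovaDecomposition ν f F)
    (hf : Integrable f (Measure.pi ν)) (hF2 : ∀ u, MemLp (F u) 2 (Measure.pi ν))
    (hdep : ∀ u, DependsOn (F u) u) :
    ∫ x, f x ^ 2 ∂Measure.pi ν - (∫ x, f x ∂Measure.pi ν) ^ 2 =
      ∑ u ∈ univ.powerset.erase ∅, ∫ x, F u x ^ 2 ∂Measure.pi ν := by
  have hsq := integral_sq_sum_of_integral_mul_eq_zero (t := univ.powerset) (fun u _ => hF2 u)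
    fun u _ w _ => hF.integral_mul_eq_zero hf hF2 hdep
  have hmean : ∫ x, F ∅ x ^ 2 ∂Measure.pi ν = (∫ x, f x ∂Measure.pi ν) ^ 2 := by
    simp [hF.apply_empty]
  simp_rw [hF.sum_powerset_univ] at hsq
  rw [hsq, ← sum_erase_add _ _ (empty_mem_powerset univ), hmean, add_sub_cancel_right]

end IsAnovaDecomposition

end Anova

theorem functional_anova_general
    (m : ℕ)
    (μ : Measure (Fin m → ℝ))
    (hμ : μ = Measure.pi fun _ => volume.restrict (Set.Ioc (0:ℝ) 1))
    (f : (Fin m → ℝ) → ℝ)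
    (hf2 : MemLp f 2 μ)
    (F : Finset (Fin m) → ((Fin m → ℝ) → ℝ))
    (hF2 : ∀ u, MemLp (F u) 2 μ)
    (hFdep : ∀ u, ∀ ξ ξ' : Fin m → ℝ, (∀ k ∈ u, ξ k = ξ' k) → F u ξ = F u ξ')
    (hrec : ∀ u : Finset (Fin m), ∀ ξ : Fin m → ℝ,
      F u ξ = ∫ η, (f (u.piecewise ξ η) -
        ∑ v ∈ u.powerset.erase u, F v (u.piecewise ξ η)) ∂μ) :
    (∀ ξ, f ξ = ∑ u ∈ (Finset.univ : Finset (Fin m)).powerset, F u ξ) ∧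
    (∀ u w : Finset (Fin m), u ≠ w → (∫ ξ, F u ξ * F w ξ ∂μ) = 0) ∧
    ((∫ ξ, (f ξ)^2 ∂μ) - (∫ ξ, f ξ ∂μ)^2 =
      ∑ u ∈ ((Finset.univ : Finset (Fin m)).powerset).erase ∅,
        ∫ ξ, (F u ξ)^2 ∂μ) := by
  subst hμ
  have : IsProbabilityMeasure (volume.restrict (Set.Ioc (0:ℝ) 1)) := ⟨by simp⟩
  have hF : IsAnovaDecomposition _ f F := fun u => funext (hrec u)
  have hdep : ∀ u, DependsOn (F u) u := fun u _ _ => hFdep u _ _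
  have hf := hf2.integrable one_le_two
  exact ⟨fun ξ => (hF.sum_powerset_univ ξ).symm, fun u w => hF.integral_mul_eq_zero hf hF2 hdep,
    hF.integral_sq_sub_sq_integral hf hF2 hdep⟩

/-- Functional ANOVA decomposition on `(0,1]^m` with the uniform product
measure: the components defined by the recursion
`f_u(ξ^u) = ∫ [f - ∑_{v ⊊ u} f_v] dF_{D∖u}` sum to `f`, are mutually
orthogonal, and decompose the variance of `f`. -/
theorem functional_anova
    (m : ℕ)
    (μ : Measure (Fin m → ℝ))
    (hμ : μ = Measure.pi fun _ => volume.restrict (Set.Ioc (0:ℝ) 1))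
    (f : (Fin m → ℝ) → ℝ)
    (hf2 : MemLp f 2 μ)
    (F : Finset (Fin m) → ((Fin m → ℝ) → ℝ))
    (hFmeas : ∀ u, Measurable (F u))
    (hF2 : ∀ u, MemLp (F u) 2 μ)
    (hFdep : ∀ u, ∀ ξ ξ' : Fin m → ℝ, (∀ k ∈ u, ξ k = ξ' k) → F u ξ = F u ξ')
    (hrec : ∀ u : Finset (Fin m), ∀ ξ : Fin m → ℝ,
      F u ξ = ∫ η, (f (u.piecewise ξ η) -
        ∑ v ∈ u.powerset.erase u, F v (u.piecewise ξ η)) ∂μ) :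
    (∀ ξ, f ξ = ∑ u ∈ (Finset.univ : Finset (Fin m)).powerset, F u ξ) ∧
    (∀ u w : Finset (Fin m), u ≠ w → (∫ ξ, F u ξ * F w ξ ∂μ) = 0) ∧
    ((∫ ξ, (f ξ)^2 ∂μ) - (∫ ξ, f ξ ∂μ)^2 =
      ∑ u ∈ ((Finset.univ : Finset (Fin m)).powerset).erase ∅,
        ∫ ξ, (F u ξ)^2 ∂μ) :=
  functional_anova_general m μ hμ f hf2 F hF2 hFdep hrec
end
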